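/- arXiv:2301.07335 — 5 statements merged into one kernel-verified Lean document; each statement's English description precedes it below -/
import Mathlib

section
/- Let p be a prime. No line of the concretely-defined finite projective plane of order p contains three distinct points of the set S = {P_α} ∪ {P_γ(k, k²) : k ∈ ZMod p}. That is, for every line L ∈ ℒ and all s₁, s₂, s₃ ∈ S with s₁, s₂, s₃ pairwise distinct, it is not the case that s₁ ∈ L, s₂ ∈ L and s₃ ∈ L. -/
/-- Points of the concretely-defined finite projective plane of order `p`:
one point `alpha`, the points `beta y`, and the points `gamma x y`. -/
inductive ProjPoint (p : ℕ) : Type where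
  | alpha : ProjPoint p
  | beta (y : ZMod p) : ProjPoint p
  | gamma (x y : ZMod p) : ProjPoint p

namespace ProjPoint

/-- The line `L_α = {P_α} ∪ {P_β(y) : y}`. -/
def Lalpha (p : ℕ) : Set (ProjPoint p) :=
  {P | P = alpha ∨ ∃ y : ZMod p, P = beta y}

/-- The line `L_β(i) = {P_α} ∪ {P_γ(i,y) : y}`. -/
def Lbeta (p : ℕ) (i : ZMod p) : Set (ProjPoint p) :=
  {P | P = alpha ∨ ∃ y : ZMod p, P = gamma i y}

/-- The line `L_γ(i,j) = {P_β(i)} ∪ {P_γ(k, i·k + j) : k}`. -/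
def Lgamma (p : ℕ) (i j : ZMod p) : Set (ProjPoint p) :=
  {P | P = beta i ∨ ∃ k : ZMod p, P = gamma k (i * k + j)}

/-- The set of lines `ℒ`. -/
def Lines (p : ℕ) : Set (Set (ProjPoint p)) :=
  {Lalpha p} ∪ {L | ∃ i : ZMod p, L = Lbeta p i} ∪
    {L | ∃ i j : ZMod p, L = Lgamma p i j}

/-- The set `S = {P_α} ∪ {P_γ(k, k²) : k}`. -/
def S (p : ℕ) : Set (ProjPoint p) :=
  {P | P = alpha ∨ ∃ k : ZMod p, P = gamma k (k ^ 2)}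

end ProjPoint

open ProjPoint in
/-- A point of `S` on `Lalpha` must be `alpha`. -/
lemma S_inter_Lalpha {p : ℕ} {s : ProjPoint p} (hS : s ∈ S p) (hL : s ∈ Lalpha p) :
    s = ProjPoint.alpha := by
  rcases hS with h | ⟨k, rfl⟩
  · exact h
  · rcases hL with h | ⟨y, h⟩ <;> simp at h

open ProjPoint in
lemma S_inter_Lbeta {p : ℕ} {i : ZMod p} {s : ProjPoint p} (hS : s ∈ S p)
    (hL : s ∈ Lbeta p i) : s = ProjPoint.alpha ∨ s = ProjPoint.gamma i (i ^ 2) := by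
  rcases hS with h | ⟨k, rfl⟩
  · exact Or.inl h
  · rcases hL with h | ⟨y, h⟩
    · simp at h
    · simp only [gamma.injEq] at h
      right; rw [h.1]

open ProjPoint in
lemma S_inter_Lgamma {p : ℕ} {i j : ZMod p} {s : ProjPoint p} (hS : s ∈ S p)
    (hL : s ∈ Lgamma p i j) :
    ∃ k : ZMod p, s = ProjPoint.gamma k (k ^ 2) ∧ k ^ 2 = i * k + j := by
  rcases hS with rfl | ⟨k, rfl⟩
  · rcases hL with h | ⟨y, h⟩ <;> simp at h
  · rcases hL with h | ⟨m, h⟩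
    · simp at h
    · simp only [gamma.injEq] at h
      exact ⟨k, rfl, h.1 ▸ h.2⟩

/-- No line of the finite projective plane of order a prime `p` contains three
pairwise distinct points of `S`. -/
theorem no_three_points_of_S_on_a_line (p : ℕ) [Fact p.Prime] :
    ∀ L ∈ ProjPoint.Lines p, ∀ s₁ ∈ ProjPoint.S p, ∀ s₂ ∈ ProjPoint.S p,
      ∀ s₃ ∈ ProjPoint.S p, s₁ ≠ s₂ → s₁ ≠ s₃ → s₂ ≠ s₃ →
        ¬(s₁ ∈ L ∧ s₂ ∈ L ∧ s₃ ∈ L) := by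
  rintro L hL s₁ hs₁ s₂ hs₂ s₃ hs₃ h12 h13 h23 ⟨m1, m2, m3⟩
  rcases hL with (rfl | ⟨i, rfl⟩) | ⟨i, j, rfl⟩
  · exact h12 ((S_inter_Lalpha hs₁ m1).trans (S_inter_Lalpha hs₂ m2).symm)
  · rcases S_inter_Lbeta hs₁ m1 with rfl | rfl <;>
      rcases S_inter_Lbeta hs₂ m2 with rfl | rfl <;>
      rcases S_inter_Lbeta hs₃ m3 with rfl | rfl <;>
      simp_all
  · obtain ⟨k₁, rfl, e₁⟩ := S_inter_Lgamma hs₁ m1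
    obtain ⟨k₂, rfl, e₂⟩ := S_inter_Lgamma hs₂ m2
    obtain ⟨k₃, rfl, e₃⟩ := S_inter_Lgamma hs₃ m3
    have hk12 : k₁ ≠ k₂ := fun h => h12 (by rw [h])
    have hk13 : k₁ ≠ k₃ := fun h => h13 (by rw [h])
    have hk23 : k₂ ≠ k₃ := fun h => h23 (by rw [h])
    have key : ∀ a b : ZMod p, a ≠ b → a ^ 2 = i * a + j → b ^ 2 = i * b + j →
        a + b = i := by
      intro a b hab ha hb
      have h : (a - b) * (a + b) = (a - b) * i := by linear_combination ha - hb
      exact mul_left_cancel₀ (sub_ne_zero.mpr hab) h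
    have h1 : k₁ + k₂ = i := key _ _ hk12 e₁ e₂
    have h2 : k₁ + k₃ = i := key _ _ hk13 e₁ e₃
    exact hk23 (by linear_combination h1 - h2)
end

section
/- Let p be a prime. The map v ↦ L_v from vertices of G to lines of ℒ is injective: for any two distinct vertices v, v' ∈ Sym2 X, the lines L_v and L_{v'} are distinct. -/
namespace ProjPoint

/-- Indexing of `S` by `X = Option (ZMod p)`: `Spt none = P_α` and
`Spt (some k) = P_γ(k, k²)`. -/
def Spt (p : ℕ) : Option (ZMod p) → ProjPoint p
  | none => alpha
  | some k => gamma k (k ^ 2)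

/-- The graph `G` on unordered pairs (diagonal allowed) from `X = Option (ZMod p)`,
where two distinct vertices are adjacent iff no element of `X` belongs to both. -/
def G (p : ℕ) : SimpleGraph (Sym2 (Option (ZMod p))) where
  Adj v w := v ≠ w ∧ ∀ x : Option (ZMod p), ¬(x ∈ v ∧ x ∈ w)
  symm := ⟨fun v w h => ⟨h.1.symm, fun x hx => h.2 x ⟨hx.2, hx.1⟩⟩⟩
  loopless := ⟨fun v h => h.1 rfl⟩

end ProjPoint

/-!
Every vertex `v` can be read back from its line: the points of `S` on `L_v` are exactly
the `S(x)` with `x ∈ v`. For a diagonal vertex this is the tangency condition. For an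
off-diagonal vertex it is the fact that a line of `ℒ` meets `S` in at most two points:
`L_α` meets it only in `P_α`, `L_β(i)` only in `P_α` and `P_γ(i, i²)`, and `L_γ(i, j)`
in the `P_γ(k, k²)` with `k² = i k + j`, a quadratic with at most two roots since
`ZMod p` is a field.
-/

theorem eq_or_eq_of_sq_eq_mul_add {R : Type*} [CommRing R] [NoZeroDivisors R]
    {i j a b c : R} (hab : a ≠ b) (ha : a ^ 2 = i * a + j) (hb : b ^ 2 = i * b + j)
    (hc : c ^ 2 = i * c + j) : c = a ∨ c = b := by
  by_contra! hne
  have hca : (c - a) * (c + a - i) = 0 := by linear_combination hc - ha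
  have hcb : (c - b) * (c + b - i) = 0 := by linear_combination hc - hb
  have hsuma := (mul_eq_zero.mp hca).resolve_left (sub_ne_zero.mpr hne.1)
  have hsumb := (mul_eq_zero.mp hcb).resolve_left (sub_ne_zero.mpr hne.2)
  exact hab (by linear_combination hsuma - hsumb)

namespace ProjPoint

variable {p : ℕ}

theorem Spt_injective : Function.Injective (Spt p) := by
  rintro (_ | a) (_ | b) h <;> simp_all [Spt]

theorem Spt_mem_S (x : Option (ZMod p)) : Spt p x ∈ S p := by
  cases x with
  | none => exact Or.inl rfl
  | some k => exact Or.inr ⟨k, rfl⟩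

theorem Spt_mem_Lalpha_iff {x : Option (ZMod p)} : Spt p x ∈ Lalpha p ↔ x = none := by
  cases x <;> simp [Spt, Lalpha]

theorem Spt_mem_Lbeta_iff {x : Option (ZMod p)} {i : ZMod p} :
    Spt p x ∈ Lbeta p i ↔ x = none ∨ x = some i := by
  cases x <;> simp [Spt, Lbeta, eq_comm]

theorem Spt_mem_Lgamma_iff {x : Option (ZMod p)} {i j : ZMod p} :
    Spt p x ∈ Lgamma p i j ↔ ∃ k, x = some k ∧ k ^ 2 = i * k + j := by
  cases x <;> simp [Spt, Lgamma]

theorem eq_or_eq_of_Spt_mem_line [Fact p.Prime] {L : Set (ProjPoint p)} (hL : L ∈ Lines p)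
    {a b x : Option (ZMod p)} (hab : a ≠ b) (ha : Spt p a ∈ L) (hb : Spt p b ∈ L)
    (hx : Spt p x ∈ L) : x = a ∨ x = b := by
  rcases hL with (rfl | ⟨i, rfl⟩) | ⟨i, j, rfl⟩
  · rw [Spt_mem_Lalpha_iff] at ha hb
    exact absurd (ha.trans hb.symm) hab
  · rw [Spt_mem_Lbeta_iff] at ha hb hx
    rcases ha with rfl | rfl <;> rcases hb with rfl | rfl <;> tauto
  · obtain ⟨a, rfl, ha'⟩ := Spt_mem_Lgamma_iff.mp ha
    obtain ⟨b, rfl, hb'⟩ := Spt_mem_Lgamma_iff.mp hb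
    obtain ⟨x, rfl, hx'⟩ := Spt_mem_Lgamma_iff.mp hx
    simpa using eq_or_eq_of_sq_eq_mul_add (by simpa using hab) ha' hb' hx'

theorem eq_of_Spt_mem_of_tangent {L : Set (ProjPoint p)} {l x : Option (ZMod p)}
    (htan : ∀ t ∈ S p, t ∈ L → t = Spt p l) (hx : Spt p x ∈ L) : x = l :=
  Spt_injective (htan _ (Spt_mem_S x) hx)

end ProjPoint

/-- The map `v ↦ L_v` is injective, where `L_v` is the unique line of `ℒ` through
`S(l)` and `S(l')` for an off-diagonal vertex `v = s(l, l')`, and the unique line of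
`ℒ` passing `S(l)` and no other point of `S` for a diagonal vertex `v = s(l, l)`. -/
theorem line_map_injective (p : ℕ) [Fact p.Prime]
    (Lv : Sym2 (Option (ZMod p)) → Set (ProjPoint p))
    (hLine : ∀ v, Lv v ∈ ProjPoint.Lines p)
    (hoff : ∀ l l' : Option (ZMod p), l ≠ l' →
      ProjPoint.Spt p l ∈ Lv s(l, l') ∧ ProjPoint.Spt p l' ∈ Lv s(l, l'))
    (hdiag : ∀ l : Option (ZMod p), ProjPoint.Spt p l ∈ Lv s(l, l) ∧
      ∀ t ∈ ProjPoint.S p, t ∈ Lv s(l, l) → t = ProjPoint.Spt p l) :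
    Function.Injective Lv := by
  have hmem : ∀ v x, x ∈ v ↔ ProjPoint.Spt p x ∈ Lv v := by
    refine Sym2.ind fun a b x => ?_
    rcases eq_or_ne a b with rfl | hab
    · rw [Sym2.mem_iff, or_self]
      exact ⟨fun hx => hx ▸ (hdiag x).1, ProjPoint.eq_of_Spt_mem_of_tangent (hdiag a).2⟩
    · rw [Sym2.mem_iff]
      refine ⟨?_, ProjPoint.eq_or_eq_of_Spt_mem_line (hLine _) hab
        (hoff a b hab).1 (hoff a b hab).2⟩
      rintro (rfl | rfl)
      exacts [(hoff x b hab).1, (hoff a x hab).2]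
  intro v w h
  exact Sym2.ext fun x => by rw [hmem, hmem, h]
end

section
/- Let p be a prime and N = p + 1. The simple graph G_N admits an edge clique cover consisting of at most p² = (N−1)² cliques: there exists a family of p² sets of vertices of G_N, each a clique of G_N, such that the two endpoints of every edge of G_N lie together in some member of the family. -/
/-- The graph `G_N` on unordered pairs (diagonal allowed) from `Fin N`, where two
distinct vertices are adjacent iff no element of `Fin N` belongs to both. -/
def GN (N : ℕ) : SimpleGraph (Sym2 (Fin N)) where
  Adj v w := v ≠ w ∧ ∀ x : Fin N, ¬(x ∈ v ∧ x ∈ w)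
  symm := ⟨fun v w h => ⟨h.1.symm, fun x hx => h.2 x ⟨hx.2, hx.1⟩⟩⟩
  loopless := ⟨fun v h => h.1 rfl⟩

/-!
Identify `Fin (p + 1)` with the projective line `P¹(𝔽_p)`. Every involution `σ` of it splits
the points into orbits `{t, σ t}`, which are pairwise disjoint, so they form a clique of `G_N`.
The `p²` elements of trace zero of `PGL₂(𝔽_p)` are involutions, parametrised by `(a, b) ∈ 𝔽_p²`,
and any two disjoint pairs `{x, y}`, `{u, z}` are orbits of one of them: this amounts to
solving two linear equations in `a` and `b`.
-/

open Function

section Involution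

variable {α β : Type*} {σ : α → α}

theorem Function.Involutive.comp_equiv (hσ : Involutive σ) (e : β ≃ α) :
    Involutive (e.symm ∘ σ ∘ e) := fun t => by
  simp only [comp_apply, Equiv.apply_symm_apply, hσ _, Equiv.symm_apply_apply]

theorem Function.Involutive.sym2_eq_of_mem (hσ : Involutive σ) {c t : α}
    (hc : c ∈ s(t, σ t)) : s(t, σ t) = s(c, σ c) := by
  rcases Sym2.mem_iff.mp hc with rfl | rfl
  · rfl
  · rw [hσ, Sym2.eq_swap]

theorem Function.Involutive.sym2_eq_of_mem_of_mem (hσ : Involutive σ) {c t u : α}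
    (ht : c ∈ s(t, σ t)) (hu : c ∈ s(u, σ u)) : s(t, σ t) = s(u, σ u) :=
  (hσ.sym2_eq_of_mem ht).trans (hσ.sym2_eq_of_mem hu).symm

end Involution

theorem GN_isClique_range_of_involutive {N : ℕ} {σ : Fin N → Fin N} (hσ : Involutive σ) :
    (GN N).IsClique (Set.range fun t => s(t, σ t)) := by
  rintro _ ⟨t, rfl⟩ _ ⟨u, rfl⟩ hne
  exact ⟨hne, fun c ⟨hct, hcu⟩ => hne (hσ.sym2_eq_of_mem_of_mem hct hcu)⟩

theorem ne_of_GN_adj_mk {N : ℕ} {x y u z : Fin N} (h : (GN N).Adj s(x, y) s(u, z)) :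
    x ≠ u ∧ x ≠ z ∧ y ≠ u ∧ y ≠ z := by
  simp_all [GN]

section TraceZeroMobius

variable {F : Type*} [Field F] [DecidableEq F]

/-- The Möbius map of `Option F = P¹(F)` (with `none = ∞`) given by the trace-zero matrix
`[[a, b], [1, -a]]` when its determinant `-(b + a²)` is nonzero, and by `[[-1, a], [0, 1]]`
otherwise. -/
def traceZeroMobius (a b : F) : Option F → Option F :=
  if b + a ^ 2 = 0 then Option.map (a - ·)
  else fun
    | none => some a
    | some t => if t = a then none else some ((a * t + b) / (t - a))

theorem traceZeroMobius_of_eq_zero {a b : F} (h : b + a ^ 2 = 0) (x : Option F) :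
    traceZeroMobius a b x = x.map (a - ·) := by
  rw [traceZeroMobius, if_pos h]

theorem traceZeroMobius_none {a b : F} (h : b + a ^ 2 ≠ 0) :
    traceZeroMobius a b none = some a := by
  rw [traceZeroMobius, if_neg h]

theorem traceZeroMobius_some_self {a b : F} (h : b + a ^ 2 ≠ 0) :
    traceZeroMobius a b (some a) = none := by
  simp [traceZeroMobius, h]

/-- The relation `t s = a (t + s) + b` is symmetric in `t` and `s`, which is why these maps are
involutions. -/
theorem traceZeroMobius_some {a b t s : F} (h : b + a ^ 2 ≠ 0) (hts : t * s = a * (t + s) + b) :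
    traceZeroMobius a b (some t) = some s := by
  have hta : t - a ≠ 0 := by
    rintro hta
    exact h (by linear_combination -hts + (s - a) * hta)
  simp only [traceZeroMobius, h, if_false, sub_ne_zero.mp hta, Option.some.injEq]
  field_simp
  linear_combination -hts

theorem involutive_traceZeroMobius (a b : F) : Involutive (traceZeroMobius a b) := by
  intro x
  by_cases h : b + a ^ 2 = 0
  · rcases x with _ | t <;> simp [traceZeroMobius_of_eq_zero h]
  rcases x with _ | t
  · rw [traceZeroMobius_none h, traceZeroMobius_some_self h]
  by_cases hta : t = a
  · rw [hta, traceZeroMobius_some_self h, traceZeroMobius_none h]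
  set s := (a * t + b) / (t - a)
  have hs : s * (t - a) = a * t + b := div_mul_cancel₀ _ (sub_ne_zero.mpr hta)
  have hts : t * s = a * (t + s) + b := by linear_combination hs
  rw [traceZeroMobius_some h hts, traceZeroMobius_some (t := s) (s := t) h (by linear_combination hts)]

theorem exists_traceZeroMobius_none_eq (y u z : Option F) (hu : none ≠ u) (hz : none ≠ z)
    (hyu : y ≠ u) (hyz : y ≠ z) :
    ∃ a b : F, traceZeroMobius a b none = y ∧ traceZeroMobius a b u = z := by
  obtain ⟨u, rfl⟩ := Option.ne_none_iff_exists'.mp hu.symm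
  obtain ⟨z, rfl⟩ := Option.ne_none_iff_exists'.mp hz.symm
  rcases y with _ | y
  · refine ⟨u + z, -(u + z) ^ 2, ?_, ?_⟩ <;> simp [traceZeroMobius_of_eq_zero]
  have hb : u * z - y * (u + z) + y ^ 2 ≠ 0 := by
    have : (u - y) * (z - y) ≠ 0 :=
      mul_ne_zero (sub_ne_zero.mpr (by grind)) (sub_ne_zero.mpr (by grind))
    exact fun h0 => this (by linear_combination h0)
  exact ⟨y, u * z - y * (u + z), traceZeroMobius_none hb, traceZeroMobius_some hb (by ring)⟩

theorem exists_traceZeroMobius_some_eq (x y u z : F) (hxu : x ≠ u) (hxz : x ≠ z) (hyu : y ≠ u)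
    (hyz : y ≠ z) :
    ∃ a b : F, traceZeroMobius a b (some x) = some y ∧ traceZeroMobius a b (some u) = some z := by
  by_cases hs : x + y = u + z
  · refine ⟨u + z, -(u + z) ^ 2, ?_, ?_⟩ <;> simp [traceZeroMobius_of_eq_zero]
    linear_combination -hs
  set a := (x * y - u * z) / (x + y - (u + z))
  set b := x * y - a * (x + y)
  have ha : a * (x + y - (u + z)) = x * y - u * z := div_mul_cancel₀ _ (sub_ne_zero.mpr hs)
  have hxy : x * y = a * (x + y) + b := by ring
  have huz : u * z = a * (u + z) + b := by linear_combination ha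
  have hb : b + a ^ 2 ≠ 0 := by
    intro h0
    have h1 : (x - a) * (y - a) = 0 := by linear_combination hxy + h0
    have h2 : (u - a) * (z - a) = 0 := by linear_combination huz + h0
    rcases mul_eq_zero.mp h1 with h | h <;> rcases mul_eq_zero.mp h2 with h' | h'
    · exact hxu (by linear_combination h - h')
    · exact hxz (by linear_combination h - h')
    · exact hyu (by linear_combination h - h')
    · exact hyz (by linear_combination h - h')
  exact ⟨a, b, traceZeroMobius_some hb hxy, traceZeroMobius_some hb huz⟩

theorem exists_traceZeroMobius_eq (x y u z : Option F) (hxu : x ≠ u) (hxz : x ≠ z) (hyu : y ≠ u)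
    (hyz : y ≠ z) :
    ∃ a b : F, traceZeroMobius a b x = y ∧ traceZeroMobius a b u = z := by
  have comm (a b : F) (x y : Option F) : traceZeroMobius a b x = y ↔ traceZeroMobius a b y = x :=
    (involutive_traceZeroMobius a b).eq_iff.trans eq_comm
  rcases x with _ | x
  · exact exists_traceZeroMobius_none_eq y u z hxu hxz hyu hyz
  rcases y with _ | y
  · simpa only [comm _ _ none] using exists_traceZeroMobius_none_eq (some x) u z hyu hyz hxu hxz
  rcases u with _ | u
  · simpa only [and_comm] using
      exists_traceZeroMobius_none_eq z (some x) (some y) hxu.symm hyu.symm hxz.symm hyz.symm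
  rcases z with _ | z
  · simpa only [and_comm, comm _ _ none] using
      exists_traceZeroMobius_none_eq u (some x) (some y) hxz.symm hyz.symm hxu.symm hyu.symm
  exact exists_traceZeroMobius_some_eq x y u z (by simpa using hxu) (by simpa using hxz)
    (by simpa using hyu) (by simpa using hyz)

end TraceZeroMobius

/-- For a prime `p` and `N = p + 1`, the graph `G_N` has an edge clique cover
consisting of `p² = (N−1)²` cliques. -/
theorem edge_clique_cover_of_card_sq (p : ℕ) (hp : p.Prime) (N : ℕ) (hN : N = p + 1) :
    ∃ F : Fin (p ^ 2) → Set (Sym2 (Fin N)),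
      (∀ i, (GN N).IsClique (F i)) ∧
      ∀ v w : Sym2 (Fin N), (GN N).Adj v w → ∃ i, v ∈ F i ∧ w ∈ F i := by
  subst hN
  have : Fact p.Prime := ⟨hp⟩
  let e : Fin (p + 1) ≃ Option (ZMod p) := Fintype.equivOfCardEq (by simp [ZMod.card])
  let idx : Fin (p ^ 2) ≃ ZMod p × ZMod p := Fintype.equivOfCardEq (by simp [ZMod.card, sq])
  let σ (i : Fin (p ^ 2)) := e.symm ∘ traceZeroMobius (idx i).1 (idx i).2 ∘ e
  refine ⟨fun i => Set.range fun t => s(t, σ i t), fun i =>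
    GN_isClique_range_of_involutive ((involutive_traceZeroMobius _ _).comp_equiv e), ?_⟩
  intro v w hvw
  induction v, w using Sym2.inductionOn₂ with | _ x y u z
  obtain ⟨hxu, hxz, hyu, hyz⟩ := ne_of_GN_adj_mk hvw
  obtain ⟨a, b, hxy, huz⟩ := exists_traceZeroMobius_eq (e x) (e y) (e u) (e z)
    (e.injective.ne hxu) (e.injective.ne hxz) (e.injective.ne hyu) (e.injective.ne hyz)
  refine ⟨idx.symm (a, b), ⟨x, ?_⟩, ⟨u, ?_⟩⟩ <;> simp [σ, hxy, huz]
end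

section
/- Let N ≥ 4 be an even natural number. Every edge clique cover of the graph G' contains at least (N−1)(N−3) cliques: if 𝔘 is a family of cliques of G' such that the two endpoints of every edge of G' lie together in some member of 𝔘, then the cardinality of 𝔘 is at least (N−1)(N−3). -/
/-- The graph `G'` whose vertices are the 2-element subsets of `Fin N`, two such
subsets being adjacent iff they are disjoint. -/
def Gpair (N : ℕ) : SimpleGraph {s : Finset (Fin N) // s.card = 2} where
  Adj a b := Disjoint a.1 b.1
  symm := ⟨fun a b h => h.symm⟩
  loopless := ⟨by
    intro a h
    rw [disjoint_self] at h
    simpa [h] using a.2⟩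

/-!
Count the darts (ordered pairs of adjacent vertices) of `G'`. The graph is regular of degree
`C(N-2, 2)` on `C(N, 2)` vertices, so it has `C(N, 2) C(N-2, 2)` darts. A clique consists of
pairwise disjoint pairs, hence has at most `N/2` vertices and contains at most `(N/2)(N/2 - 1)`
darts. Every dart lies in some clique of the cover, and `4 ⌊N/2⌋ (⌊N/2⌋ - 1) ≤ N (N - 2)`.
-/

open Finset

namespace SimpleGraph

variable {V : Type*} [Fintype V] (G : SimpleGraph V) [DecidableRel G.Adj]

theorem sum_degrees_le_of_forall_adj_exists_mem (F : Set (Set V)) (k : ℕ)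
    (hsize : ∀ C ∈ F, C.ncard ≤ k) (hcover : ∀ v w, G.Adj v w → ∃ C ∈ F, v ∈ C ∧ w ∈ C) :
    ∑ v, G.degree v ≤ F.ncard * (k * (k - 1)) := by
  classical
  have hoffDiag : ∀ C ∈ F.toFinset, #C.toFinset.offDiag ≤ k * (k - 1) := by
    intro C hC
    have hCk : #C.toFinset ≤ k := by
      rw [← Set.ncard_eq_toFinset_card']
      exact hsize C (Set.mem_toFinset.mp hC)
    rw [offDiag_card, ← Nat.mul_sub_one]
    exact Nat.mul_le_mul hCk (Nat.sub_le_sub_right hCk 1)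
  have hdarts : #(univ : Finset G.Dart) ≤ #(F.toFinset.biUnion fun C => C.toFinset.offDiag) := by
    refine card_le_card_of_injOn Dart.toProd (fun d _ => ?_) Dart.toProd_injective.injOn
    obtain ⟨C, hC, hv, hw⟩ := hcover _ _ d.adj
    simp only [coe_biUnion, coe_offDiag, Set.coe_toFinset, Set.mem_iUnion, Set.mem_offDiag]
    exact ⟨C, hC, hv, hw, d.adj.ne⟩
  calc ∑ v, G.degree v = #(univ : Finset G.Dart) := G.dart_card_eq_sum_degrees.symm
    _ ≤ #F.toFinset * (k * (k - 1)) := hdarts.trans (card_biUnion_le_card_mul _ _ _ hoffDiag)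
    _ = F.ncard * (k * (k - 1)) := by rw [Set.ncard_eq_toFinset_card']

end SimpleGraph

theorem Set.PairwiseDisjoint.mul_ncard_le {α : Type*} [Fintype α] {k : ℕ}
    {S : Set {t : Finset α // #t = k}} (hS : S.PairwiseDisjoint Subtype.val) :
    k * S.ncard ≤ Fintype.card α := by
  classical
  calc k * S.ncard = #(S.toFinset.biUnion Subtype.val) := by
        rw [card_biUnion (by simpa using hS), sum_congr rfl fun t _ => t.2, sum_const,
          smul_eq_mul, Set.ncard_eq_toFinset_card', mul_comm]
    _ ≤ Fintype.card α := card_le_univ _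

namespace Gpair

instance (N : ℕ) : DecidableRel (Gpair N).Adj := fun a b =>
  inferInstanceAs (Decidable (Disjoint a.1 b.1))

@[simp]
theorem adj_iff {N : ℕ} {a b : {s : Finset (Fin N) // #s = 2}} :
    (Gpair N).Adj a b ↔ Disjoint a.1 b.1 :=
  Iff.rfl

theorem image_val_neighborFinset {N : ℕ} (v : {s : Finset (Fin N) // #s = 2}) :
    ((Gpair N).neighborFinset v).image Subtype.val = v.1ᶜ.powersetCard 2 := by
  ext t
  simp [mem_powersetCard, subset_compl_iff_disjoint_left, and_comm]

theorem degree_eq {N : ℕ} (v : {s : Finset (Fin N) // #s = 2}) :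
    (Gpair N).degree v = (N - 2).choose 2 := by
  rw [← SimpleGraph.card_neighborFinset_eq_degree,
    ← card_image_of_injective _ Subtype.val_injective, image_val_neighborFinset,
    card_powersetCard, card_compl, v.2, Fintype.card_fin]

theorem sum_degrees (N : ℕ) : ∑ v, (Gpair N).degree v = N.choose 2 * (N - 2).choose 2 := by
  simp only [degree_eq, sum_const, card_univ, Fintype.card_finset_len, Fintype.card_fin,
    smul_eq_mul]

end Gpair

theorem Nat.two_mul_choose_two (n : ℕ) : 2 * n.choose 2 = n * (n - 1) := by
  rw [Nat.choose_two_right, mul_comm, Nat.div_two_mul_two_of_even (Nat.even_mul_pred_self n)]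

theorem Nat.sub_one_mul_sub_three_le_of_choose_two_mul_le {N f : ℕ}
    (h : N.choose 2 * (N - 2).choose 2 ≤ f * (N / 2 * (N / 2 - 1))) :
    (N - 1) * (N - 3) ≤ f := by
  rcases le_or_gt N 2 with hN | hN
  · simp [Nat.sub_eq_zero_of_le (by omega : N ≤ 3)]
  have hpos : 0 < N * (N - 2) := Nat.mul_pos (by omega) (by omega)
  refine Nat.le_of_mul_le_mul_left ?_ hpos
  calc N * (N - 2) * ((N - 1) * (N - 3))
      = 2 * N.choose 2 * (2 * (N - 2).choose 2) := by
        rw [two_mul_choose_two, two_mul_choose_two, show N - 2 - 1 = N - 3 by omega]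
        ring
    _ ≤ 2 * 2 * (f * (N / 2 * (N / 2 - 1))) := by
        rw [mul_mul_mul_comm]
        exact Nat.mul_le_mul_left _ h
    _ = f * (2 * (N / 2) * (2 * (N / 2 - 1))) := by ring
    _ ≤ f * (N * (N - 2)) := Nat.mul_le_mul_left f (Nat.mul_le_mul (by omega) (by omega))
    _ = N * (N - 2) * f := mul_comm _ _

theorem edge_clique_cover_lower_bound_general (N : ℕ)
    (F : Set (Set {t : Finset (Fin N) // t.card = 2}))
    (hclique : ∀ C ∈ F, (Gpair N).IsClique C)
    (hcover : ∀ v w, (Gpair N).Adj v w → ∃ C ∈ F, v ∈ C ∧ w ∈ C) :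
    (N - 1) * (N - 3) ≤ F.ncard := by
  have hsize : ∀ C ∈ F, C.ncard ≤ N / 2 := fun C hC => by
    have := Set.PairwiseDisjoint.mul_ncard_le (hclique C hC)
    rw [Fintype.card_fin] at this
    omega
  have hcount := (Gpair N).sum_degrees_le_of_forall_adj_exists_mem F (N / 2) hsize hcover
  rw [Gpair.sum_degrees] at hcount
  exact Nat.sub_one_mul_sub_three_le_of_choose_two_mul_le hcount

/-- For even `N ≥ 4`, every edge clique cover of `G'` contains at least
`(N−1)(N−3)` cliques. -/
theorem edge_clique_cover_lower_bound (N : ℕ) (h4 : 4 ≤ N) (he : Even N)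
    (F : Set (Set {t : Finset (Fin N) // t.card = 2}))
    (hclique : ∀ C ∈ F, (Gpair N).IsClique C)
    (hcover : ∀ v w, (Gpair N).Adj v w → ∃ C ∈ F, v ∈ C ∧ w ∈ C) :
    (N - 1) * (N - 3) ≤ F.ncard :=
  edge_clique_cover_lower_bound_general N F hclique hcover
end

section
/- Let N ≥ 2 be an even natural number. There exist N−1 sets I_1, …, I_{N−1}, each consisting of pairwise disjoint 2-element subsets of Fin N, whose union is the set of all 2-element subsets of Fin N. Equivalently, the edge set of the complete graph on N vertices can be covered by N−1 perfect matchings. -/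
/-- For even `N ≥ 2`, there exist `N − 1` sets, each consisting of pairwise
disjoint 2-element subsets of `Fin N` (perfect matchings / rounds of a round-robin
tournament), whose union is the set of all 2-element subsets of `Fin N`. -/
theorem round_robin_schedule_exists (N : ℕ) (h2 : 2 ≤ N) (he : Even N) :
    ∃ I : Fin (N - 1) → Set (Finset (Fin N)),
      (∀ i, ∀ a ∈ I i, a.card = 2) ∧
      (∀ i, (I i).Pairwise (fun a b => Disjoint a b)) ∧
      (⋃ i, I i) = {s : Finset (Fin N) | s.card = 2} := by
  have hn1 : 1 ≤ N - 1 := by omega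
  have hodd : Odd (N - 1) := Nat.Even.sub_odd (by omega) he odd_one
  set n := N - 1 with hn
  -- "round" contribution of x when paired with y: x if x is finite, else y
  set h : Fin N → Fin N → ℕ := fun x y => if (x : ℕ) < n then x else y with hh
  have key : ∀ (v b d : Fin N), v ≠ b → v ≠ d →
      (h v b + h b v) % n = (h v d + h d v) % n → b = d := by
    intro v b d hvb hvd hr
    have hbN : (b : ℕ) < N := b.isLt
    have hdN : (d : ℕ) < N := d.isLt
    have hvN : (v : ℕ) < N := v.isLt
    have hvb' : (v : ℕ) ≠ (b : ℕ) := fun e => hvb (Fin.ext e)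
    have hvd' : (v : ℕ) ≠ (d : ℕ) := fun e => hvd (Fin.ext e)
    by_cases hv : (v : ℕ) < n
    · by_cases hb : (b : ℕ) < n <;> by_cases hd : (d : ℕ) < n
      · simp only [hh, if_pos hv, if_pos hb, if_pos hd] at hr
        have : (b : ℕ) ≡ (d : ℕ) [MOD n] := Nat.ModEq.add_left_cancel' _ hr
        exact Fin.ext (by rwa [Nat.ModEq, Nat.mod_eq_of_lt hb, Nat.mod_eq_of_lt hd] at this)
      · exfalso
        simp only [hh, if_pos hv, if_pos hb, if_neg hd] at hr
        have : (b : ℕ) ≡ (v : ℕ) [MOD n] := Nat.ModEq.add_left_cancel' _ hr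
        rw [Nat.ModEq, Nat.mod_eq_of_lt hb, Nat.mod_eq_of_lt hv] at this
        exact hvb' this.symm
      · exfalso
        simp only [hh, if_pos hv, if_neg hb, if_pos hd] at hr
        have : (v : ℕ) ≡ (d : ℕ) [MOD n] := Nat.ModEq.add_left_cancel' _ hr
        rw [Nat.ModEq, Nat.mod_eq_of_lt hv, Nat.mod_eq_of_lt hd] at this
        exact hvd' this
      · exact Fin.ext (by omega)
    · have hb : (b : ℕ) < n := by omega
      have hd : (d : ℕ) < n := by omega
      simp only [hh, if_neg hv, if_pos hb, if_pos hd] at hr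
      have h2b : 2 * (b : ℕ) ≡ 2 * (d : ℕ) [MOD n] := by
        rw [two_mul, two_mul]; exact hr
      have := Nat.ModEq.cancel_left_of_coprime (hodd.coprime_two_left).symm h2b
      exact Fin.ext (by rwa [Nat.ModEq, Nat.mod_eq_of_lt hb, Nat.mod_eq_of_lt hd] at this)
  refine ⟨fun i => {s | ∃ a b : Fin N, a ≠ b ∧ s = {a, b} ∧ (h a b + h b a) % n = (i : ℕ)},
      ?_, ?_, ?_⟩
  · rintro i s ⟨a, b, hab, rfl, -⟩
    exact Finset.card_pair hab
  · rintro i s ⟨a, b, hab, rfl, hra⟩ t ⟨c, d, hcd, rfl, hrc⟩ hne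
    by_contra hdis
    obtain ⟨v, hv1, hv2⟩ := Finset.not_disjoint_iff.1 hdis
    apply hne
    have comm : ∀ x y : Fin N, h x y + h y x = h y x + h x y := fun x y => add_comm _ _
    have hra' : (h b a + h a b) % n = (i : ℕ) := by rw [add_comm]; exact hra
    have hrc' : (h d c + h c d) % n = (i : ℕ) := by rw [add_comm]; exact hrc
    rcases Finset.mem_insert.1 hv1 with hva | hvb <;>
      rcases Finset.mem_insert.1 hv2 with hvc | hvd
    · subst hva; subst hvc
      rw [key v b d hab hcd (hra.trans hrc.symm)]
    · have hvd' : v = d := Finset.mem_singleton.1 hvd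
      subst hva; subst hvd'
      rw [key v b c hab (Ne.symm hcd) (hra.trans hrc'.symm), Finset.pair_comm]
    · have hvb' : v = b := Finset.mem_singleton.1 hvb
      subst hvb'; subst hvc
      rw [Finset.pair_comm, key v a d (Ne.symm hab) hcd (hra'.trans hrc.symm)]
    · have hvb' : v = b := Finset.mem_singleton.1 hvb
      have hvd' : v = d := Finset.mem_singleton.1 hvd
      subst hvb'; subst hvd'
      rw [Finset.pair_comm,
        key v a c (Ne.symm hab) (Ne.symm hcd) (hra'.trans hrc'.symm), Finset.pair_comm]
  · ext s
    simp only [Set.mem_iUnion, Set.mem_setOf_eq]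
    constructor
    · rintro ⟨i, a, b, hab, rfl, -⟩
      exact Finset.card_pair hab
    · intro hs
      obtain ⟨a, b, hab, rfl⟩ := Finset.card_eq_two.1 hs
      exact ⟨⟨(h a b + h b a) % n, Nat.mod_lt _ (by omega)⟩, a, b, hab, rfl, rfl⟩
end
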